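/- Let Γ be a metric graph with simple model (G, ℓ) where every edge has length at least 1. Define Ψ : C(G) → Zh(Γ) as follows: for each vertex v with degree d_v, let B_v be the ball of radius 1/(4 d_v) around v in Γ; for g : V(G) → ℝ, Ψ(g) equals g(v) on B_v and is affine linear on the remaining middle segment of each edge. Then Ψ is injective linear, and for every g ≠ 0: (∫_Γ (Ψg)'² dx)/(∫_Γ (Ψg)² dx) ≤ 8 · (Σ_{{u,v} ∈ E} (g(u) − g(v))²)/(Σ_v g(v)²). -/

import Mathlib

open BigOperators MeasureTheory

variable {V : Type*} [Fintype V] [DecidableEq V]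

/-- The Dirichlet energy `∫_Γ f'² dx` of a function on a metric graph given by
per-edge functions (each edge counted twice, whence the `1/2`). -/
noncomputable def mgEnergy (G : SimpleGraph V) [DecidableRel G.Adj]
    (ℓ : V → V → ℝ) (f : V → V → ℝ → ℝ) : ℝ :=
  (1/2) * ∑ u, ∑ v, if G.Adj u v then
    ∫ x in (0:ℝ)..(ℓ u v), (deriv (f u v) x) ^ 2 else 0

/-- The squared `L²` norm `∫_Γ f² dx` of a function on a metric graph. -/
noncomputable def mgNorm (G : SimpleGraph V) [DecidableRel G.Adj]
    (ℓ : V → V → ℝ) (f : V → V → ℝ → ℝ) : ℝ :=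
  (1/2) * ∑ u, ∑ v, if G.Adj u v then
    ∫ x in (0:ℝ)..(ℓ u v), (f u v x) ^ 2 else 0

/-- The extension map `Ψ`: for `g : V → ℝ`, `Ψ g` equals `g v` on the ball
`B_v` of radius `1/(4 d_v)` around each vertex `v`, and is affine linear on
the middle segment of each edge. (The edge `{u,v}` is parametrized by
`[0, ℓ u v]` starting at `u`.) -/
noncomputable def Psi (G : SimpleGraph V) [DecidableRel G.Adj]
    (ℓ : V → V → ℝ) (g : V → ℝ) : V → V → ℝ → ℝ :=
  fun u v x =>
    if x ≤ 1 / (4 * (G.degree u : ℝ)) then g u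
    else if ℓ u v - 1 / (4 * (G.degree v : ℝ)) ≤ x then g v
    else g u + (x - 1 / (4 * (G.degree u : ℝ))) * (g v - g u) /
      (ℓ u v - 1 / (4 * (G.degree u : ℝ)) - 1 / (4 * (G.degree v : ℝ)))

/-! On each edge, `Ψ g` is constant on the two end pieces of lengths `1/(4 d_u)`, `1/(4 d_v)`
and affine on the middle piece, whose length is at least `1/2` because edges have length at
least `1`. Hence the energy of an edge is `(g u - g v)²` divided by that length, at most
`2 (g u - g v)²`, while the end pieces alone contribute `g u² / (4 d_u) + g v² / (4 d_v)` to the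
`L²` mass; summing over the `d_v` edges at each vertex, the mass is at least `∑ g v² / 4`.
Dividing gives the factor `2 · 4 = 8`. -/

open Filter Set Topology

noncomputable def edgeProfile (p q a b L x : ℝ) : ℝ :=
  if x ≤ a then p else if L - b ≤ x then q else p + (x - a) * (q - p) / (L - a - b)

section EdgeProfile

variable {p q a b L : ℝ}

theorem edgeProfile_eq_clamp (hab : a < L - b) (x : ℝ) :
    edgeProfile p q a b L x = p + (q - p) / (L - a - b) * (min (max x a) (L - b) - a) := by
  have hlen : L - a - b ≠ 0 := by linarith
  unfold edgeProfile
  split_ifs with hxa hxb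
  · rw [max_eq_right hxa, min_eq_left hab.le]; ring
  · rw [max_eq_left (by linarith), min_eq_right hxb]; field_simp; ring
  · rw [max_eq_left (by linarith), min_eq_left (by linarith)]; ring

theorem continuous_edgeProfile (hab : a < L - b) : Continuous (edgeProfile p q a b L) := by
  rw [funext (edgeProfile_eq_clamp hab)]
  fun_prop

theorem deriv_edgeProfile_of_lt {x : ℝ} (hx : x < a) : deriv (edgeProfile p q a b L) x = 0 := by
  have hconst : edgeProfile p q a b L =ᶠ[𝓝 x] fun _ => p := by
    filter_upwards [Iio_mem_nhds hx] with y hy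
    exact if_pos (le_of_lt hy)
  rw [hconst.deriv_eq, deriv_const]

theorem deriv_edgeProfile_of_gt (hab : a < L - b) {x : ℝ} (hx : L - b < x) :
    deriv (edgeProfile p q a b L) x = 0 := by
  have hconst : edgeProfile p q a b L =ᶠ[𝓝 x] fun _ => q := by
    filter_upwards [Ioi_mem_nhds hx] with y hy
    rw [edgeProfile, if_neg (by linarith [mem_Ioi.1 hy]), if_pos (le_of_lt hy)]
  rw [hconst.deriv_eq, deriv_const]

theorem deriv_edgeProfile_of_mem_Ioo {x : ℝ} (hx : x ∈ Ioo a (L - b)) :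
    deriv (edgeProfile p q a b L) x = (q - p) / (L - a - b) := by
  have haffine : edgeProfile p q a b L =ᶠ[𝓝 x] fun y => p + (y - a) * (q - p) / (L - a - b) := by
    filter_upwards [Ioo_mem_nhds hx.1 hx.2] with y hy
    rw [edgeProfile, if_neg (not_le.2 hy.1), if_neg (not_le.2 hy.2)]
  rw [haffine.deriv_eq]
  simp

theorem deriv_edgeProfile_sq_ae_eq (hab : a < L - b) :
    (fun x => deriv (edgeProfile p q a b L) x ^ 2) =ᵐ[volume]
      (Ioc a (L - b)).indicator fun _ => ((q - p) / (L - a - b)) ^ 2 := by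
  filter_upwards [Measure.ae_ne volume a, Measure.ae_ne volume (L - b)] with x hxa hxb
  rcases hxa.lt_or_gt with hxa | hxa
  · rw [deriv_edgeProfile_of_lt hxa, indicator_of_notMem (fun hx => by linarith [hx.1])]
    simp
  rcases hxb.lt_or_gt with hxb | hxb
  · rw [deriv_edgeProfile_of_mem_Ioo ⟨hxa, hxb⟩, indicator_of_mem (show x ∈ Ioc a (L - b) from ⟨hxa, hxb.le⟩)]
  · rw [deriv_edgeProfile_of_gt hab hxb, indicator_of_notMem (fun hx => by linarith [hx.2])]
    simp

theorem integral_deriv_edgeProfile_sq (ha : 0 ≤ a) (hb : 0 ≤ b) (hab : a < L - b) :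
    ∫ x in (0 : ℝ)..L, deriv (edgeProfile p q a b L) x ^ 2 = (q - p) ^ 2 / (L - a - b) := by
  rw [intervalIntegral.integral_of_le (by linarith),
    integral_congr_ae (ae_restrict_of_ae (deriv_edgeProfile_sq_ae_eq hab)),
    integral_indicator measurableSet_Ioc, Measure.restrict_restrict measurableSet_Ioc,
    inter_eq_left.2 (Ioc_subset_Ioc ha (by linarith)), setIntegral_const,
    Real.volume_real_Ioc_of_le hab.le, smul_eq_mul]
  have hlen : L - a - b ≠ 0 := by linarith
  field_simp
  ring

theorem integral_edgeProfile_sq_ge (ha : 0 ≤ a) (hb : 0 ≤ b) (hab : a < L - b) :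
    a * p ^ 2 + b * q ^ 2 ≤ ∫ x in (0 : ℝ)..L, edgeProfile p q a b L x ^ 2 := by
  have hint (s t : ℝ) : IntervalIntegrable (fun x => edgeProfile p q a b L x ^ 2) volume s t :=
    ((continuous_edgeProfile hab).pow 2).intervalIntegrable s t
  have hleft : ∫ x in (0 : ℝ)..a, edgeProfile p q a b L x ^ 2 = a * p ^ 2 := by
    rw [intervalIntegral.integral_congr (g := fun _ => p ^ 2) fun x hx => ?_]
    · simp
    rw [uIcc_of_le ha] at hx
    simp only [edgeProfile, if_pos hx.2]
  have hright : ∫ x in (L - b)..L, edgeProfile p q a b L x ^ 2 = b * q ^ 2 := by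
    rw [intervalIntegral.integral_congr (g := fun _ => q ^ 2) fun x hx => ?_]
    · simp
    rw [uIcc_of_le (by linarith)] at hx
    simp only [edgeProfile, if_neg (show ¬x ≤ a by linarith [hx.1]), if_pos hx.1]
  have hmid : 0 ≤ ∫ x in a..(L - b), edgeProfile p q a b L x ^ 2 :=
    intervalIntegral.integral_nonneg hab.le fun _ _ => sq_nonneg _
  rw [← intervalIntegral.integral_add_adjacent_intervals (hint 0 a) (hint a L),
    ← intervalIntegral.integral_add_adjacent_intervals (hint a (L - b)) (hint (L - b) L)]
  linarith

end EdgeProfile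

theorem half_le_sub_one_div_four_mul {L m n : ℝ} (hL : 1 ≤ L) (hm : 1 ≤ m) (hn : 1 ≤ n) :
    1 / 2 ≤ L - 1 / (4 * m) - 1 / (4 * n) := by
  have hm' : 1 / (4 * m) ≤ 1 / 4 := one_div_le_one_div_of_le (by norm_num) (by linarith)
  have hn' : 1 / (4 * n) ≤ 1 / 4 := one_div_le_one_div_of_le (by norm_num) (by linarith)
  linarith

section Graph

-- Redeclaring `V` keeps the ambient `[DecidableEq V]` out of the lemmas of this section.
variable {V : Type*} [Fintype V] {G : SimpleGraph V} [DecidableRel G.Adj] {ℓ : V → V → ℝ}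

theorem Psi_eq_edgeProfile (g : V → ℝ) (u v : V) :
    Psi G ℓ g u v = edgeProfile (g u) (g v) (1 / (4 * G.degree u)) (1 / (4 * G.degree v))
      (ℓ u v) :=
  rfl

theorem Psi_injective : Function.Injective (Psi G ℓ) := by
  intro g g' h
  funext v
  have hv : (0 : ℝ) ≤ 1 / (4 * (G.degree v : ℝ)) := by positivity
  simpa only [Psi, if_pos hv] using congr_fun (congr_fun (congr_fun h v) v) 0

theorem isLinearMap_Psi : IsLinearMap ℝ (Psi G ℓ) where
  map_add g g' := by
    funext u v x
    simp only [Psi, Pi.add_apply]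
    split_ifs <;> ring
  map_smul c g := by
    funext u v x
    simp only [Psi, Pi.smul_apply, smul_eq_mul]
    split_ifs <;> ring

theorem mgEnergy_nonneg (hℓ : ∀ u v, G.Adj u v → 0 ≤ ℓ u v) (f : V → V → ℝ → ℝ) :
    0 ≤ mgEnergy G ℓ f := by
  unfold mgEnergy
  refine mul_nonneg (by norm_num) (Finset.sum_nonneg fun u _ => Finset.sum_nonneg fun v _ => ?_)
  split_ifs with huv
  · exact intervalIntegral.integral_nonneg (hℓ u v huv) fun _ _ => sq_nonneg _
  · exact le_rfl

theorem integral_deriv_Psi_sq_le {u v : V} (hu : 0 < G.degree u) (hv : 0 < G.degree v)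
    (hL : 1 ≤ ℓ u v) (g : V → ℝ) :
    ∫ x in (0 : ℝ)..ℓ u v, deriv (Psi G ℓ g u v) x ^ 2 ≤ 2 * (g u - g v) ^ 2 := by
  have hmid := half_le_sub_one_div_four_mul hL (m := G.degree u) (n := G.degree v)
    (by exact_mod_cast hu) (by exact_mod_cast hv)
  rw [Psi_eq_edgeProfile, integral_deriv_edgeProfile_sq (by positivity) (by positivity) (by linarith),
    div_le_iff₀ (by linarith)]
  nlinarith [sq_nonneg (g u - g v)]

theorem integral_Psi_sq_ge {u v : V} (hu : 0 < G.degree u) (hv : 0 < G.degree v)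
    (hL : 1 ≤ ℓ u v) (g : V → ℝ) :
    g u ^ 2 / 4 / G.degree u + g v ^ 2 / 4 / G.degree v ≤
      ∫ x in (0 : ℝ)..ℓ u v, Psi G ℓ g u v x ^ 2 := by
  have hmid := half_le_sub_one_div_four_mul hL (m := G.degree u) (n := G.degree v)
    (by exact_mod_cast hu) (by exact_mod_cast hv)
  rw [Psi_eq_edgeProfile]
  refine (le_of_eq ?_).trans (integral_edgeProfile_sq_ge (by positivity) (by positivity) ?_)
  · ring
  · linarith

theorem sum_sum_adj_div_degree (hdeg : ∀ v, 0 < G.degree v) (c : V → ℝ) :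
    ∑ u, ∑ v, (if G.Adj u v then c u / G.degree u else 0) = ∑ u, c u := by
  refine Finset.sum_congr rfl fun u _ => ?_
  have hu : (G.degree u : ℝ) ≠ 0 := by exact_mod_cast (hdeg u).ne'
  have hcount : ∑ v, (if G.Adj u v then c u / G.degree u else 0) =
      G.degree u * (c u / G.degree u) := by
    rw [G.degree_eq_sum_if_adj, Finset.sum_mul]
    simp only [ite_mul, one_mul, zero_mul]
  rw [hcount, mul_div_cancel₀ _ hu]

theorem mgEnergy_Psi_le (hdeg : ∀ v, 0 < G.degree v) (hℓ : ∀ u v, G.Adj u v → 1 ≤ ℓ u v)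
    (g : V → ℝ) :
    mgEnergy G ℓ (Psi G ℓ g) ≤ ∑ u, ∑ v, if G.Adj u v then (g u - g v) ^ 2 else 0 := by
  calc mgEnergy G ℓ (Psi G ℓ g)
      ≤ 1 / 2 * ∑ u, ∑ v, if G.Adj u v then 2 * (g u - g v) ^ 2 else 0 := by
        unfold mgEnergy
        gcongr with u _ v _
        split_ifs with huv
        · exact integral_deriv_Psi_sq_le (hdeg u) (hdeg v) (hℓ u v huv) g
        · exact le_rfl
    _ = ∑ u, ∑ v, if G.Adj u v then (g u - g v) ^ 2 else 0 := by
        simp only [Finset.mul_sum, mul_ite, mul_zero, ← mul_assoc]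
        norm_num

theorem mgNorm_Psi_ge (hdeg : ∀ v, 0 < G.degree v) (hℓ : ∀ u v, G.Adj u v → 1 ≤ ℓ u v)
    (g : V → ℝ) :
    (∑ v, g v ^ 2) / 4 ≤ mgNorm G ℓ (Psi G ℓ g) := by
  calc (∑ v, g v ^ 2) / 4
      = 1 / 2 * ∑ u, ∑ v,
          if G.Adj u v then g u ^ 2 / 4 / G.degree u + g v ^ 2 / 4 / G.degree v else 0 := by
        simp only [ite_add_zero, Finset.sum_add_distrib, sum_sum_adj_div_degree hdeg]
        rw [Finset.sum_comm (f := fun u v => if G.Adj u v then g v ^ 2 / 4 / G.degree v else 0)]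
        simp only [G.adj_comm _ (_ : V), sum_sum_adj_div_degree hdeg, Finset.sum_div]
        ring
    _ ≤ mgNorm G ℓ (Psi G ℓ g) := by
        unfold mgNorm
        gcongr with u _ v _
        split_ifs with huv
        · exact integral_Psi_sq_ge (hdeg u) (hdeg v) (hℓ u v huv) g
        · exact le_rfl

end Graph

theorem stmt12_general (G : SimpleGraph V) [DecidableRel G.Adj]
    (ℓ : V → V → ℝ)
    (hge1 : ∀ u v, G.Adj u v → 1 ≤ ℓ u v)
    (hdeg : ∀ v, 0 < G.degree v) :
    Function.Injective (Psi G ℓ) ∧ IsLinearMap ℝ (Psi G ℓ) ∧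
      ∀ g : V → ℝ, g ≠ 0 →
        mgEnergy G ℓ (Psi G ℓ g) / mgNorm G ℓ (Psi G ℓ g) ≤
          8 * ((1/2) * ∑ u, ∑ v, if G.Adj u v then (g u - g v) ^ 2 else 0) /
            (∑ v, (g v) ^ 2) := by
  refine ⟨Psi_injective, isLinearMap_Psi, fun g hg => ?_⟩
  obtain ⟨w, hw⟩ := Function.ne_iff.1 hg
  have hmass : 0 < ∑ v, g v ^ 2 :=
    Finset.sum_pos' (fun v _ => sq_nonneg _) ⟨w, Finset.mem_univ w, pow_two_pos_of_ne_zero hw⟩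
  have henergy := mgEnergy_nonneg (fun u v huv => zero_le_one.trans (hge1 u v huv)) (Psi G ℓ g)
  calc mgEnergy G ℓ (Psi G ℓ g) / mgNorm G ℓ (Psi G ℓ g)
      ≤ mgEnergy G ℓ (Psi G ℓ g) / ((∑ v, g v ^ 2) / 4) :=
        div_le_div_of_nonneg_left henergy (by positivity) (mgNorm_Psi_ge hdeg hge1 g)
    _ ≤ (∑ u, ∑ v, if G.Adj u v then (g u - g v) ^ 2 else 0) / ((∑ v, g v ^ 2) / 4) := by
        gcongr
        exact mgEnergy_Psi_le hdeg hge1 g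
    _ = _ := by
        field_simp
        ring

/-- for a metric graph with simple model `(G, ℓ)` whose edges all
have length at least `1`, the map `Ψ` is injective and linear, and its
Rayleigh-quotient distortion is at most `8`: for every `g ≠ 0`,
`(∫ (Ψg)'²)/(∫ (Ψg)²) ≤ 8 (∑_{{u,v} ∈ E} (g u - g v)²)/(∑_v g v²)`. -/
theorem stmt12 (G : SimpleGraph V) [DecidableRel G.Adj] (hconn : G.Connected)
    (ℓ : V → V → ℝ) (hsym : ∀ u v, ℓ u v = ℓ v u)
    (hge1 : ∀ u v, G.Adj u v → 1 ≤ ℓ u v)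
    (hdeg : ∀ v, 0 < G.degree v) :
    Function.Injective (Psi G ℓ) ∧ IsLinearMap ℝ (Psi G ℓ) ∧
      ∀ g : V → ℝ, g ≠ 0 →
        mgEnergy G ℓ (Psi G ℓ g) / mgNorm G ℓ (Psi G ℓ g) ≤
          8 * ((1/2) * ∑ u, ∑ v, if G.Adj u v then (g u - g v) ^ 2 else 0) /
            (∑ v, (g v) ^ 2) :=
  stmt12_general G ℓ hge1 hdeg
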